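/- Let H ≤ 𝕋 be a countable subgroup admitting a characterizing sequence, let (ε_j) be a sequence in [0,1] converging to 0, and let ℕ be partitioned into consecutive intervals I_j with |I_j| → ∞. Then there exists a sequence (k_n) of nonnegative integers characterizing H such that |{n : k_n ∈ I_j}| / |I_j| ≥ ε_j for all j. In particular H admits characterizing sequences with bounded quotients k_{n+1}/k_n. -/

import Mathlib

open scoped Classical

def Characterizes (k : ℕ → ℕ) (H : AddSubgroup (AddCircle (1:ℝ))) : Prop :=
  ∀ α : AddCircle (1:ℝ),
    α ∈ H ↔ Filter.Tendsto (fun n => ‖k n • α‖) Filter.atTop (nhds 0)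

/-!
Enumerate `H = {e 0, e 1, …}` and let `bohrSet e t` be the set of `m` with `‖m • e j‖ < 1/(t+1)`
for all `j < t`. The orbit closure of `(e 0, …, e (t-1))` in the compact group `𝕋ᵗ` is a group,
so every Bohr set is syndetic and fills a fixed proportion of all long intervals. Hence the largest
level `t_j ≤ j` whose Bohr set fills a proportion `ε_j` of `I_j` tends to infinity, and any sequence
taking values in Bohr sets of levels tending to infinity tends to `0` on `H`; interleaving `c` with
the chosen Bohr elements therefore still characterizes `H`. For bounded quotients choose such Bohr
elements `a r ∈ [2^r, 2^(r+1))` and enumerate the values of `c + a` and `a` increasingly: `c` is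
recovered from `c n • α = (c n + a n) • α - a n • α`.
-/

open Filter Topology Set

section CompactGroup

variable {G : Type*} [SeminormedAddCommGroup G] [CompactSpace G]

lemma exists_ge_norm_nsmul_lt (x : G) {δ : ℝ} (hδ : 0 < δ) (M : ℕ) :
    ∃ N, M ≤ N ∧ ‖N • x‖ < δ := by
  obtain ⟨_, φ, hφ, hlim⟩ := CompactSpace.tendsto_subseq fun n : ℕ => n • x
  obtain ⟨K, hK⟩ := Metric.cauchySeq_iff'.1 hlim.cauchySeq δ hδ
  refine ⟨φ (M + K) - φ K, Nat.le_sub_of_add_le (hφ.add_le_nat M K), ?_⟩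
  rw [sub_nsmul x (hφ.monotone (Nat.le_add_left K M)), ← sub_eq_add_neg, ← dist_eq_norm]
  exact hK (M + K) (Nat.le_add_left K M)

lemma neg_mem_closure_range_nsmul (x : G) {y : G}
    (hy : y ∈ closure (range fun n : ℕ => n • x)) :
    -y ∈ closure (range fun n : ℕ => n • x) := by
  refine Metric.mem_closure_range_iff.2 fun δ hδ => ?_
  obtain ⟨n, hn⟩ := Metric.mem_closure_range_iff.1 hy (δ / 2) (half_pos hδ)
  obtain ⟨N, hnN, hN⟩ := exists_ge_norm_nsmul_lt x (half_pos hδ) n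
  refine ⟨N - n, ?_⟩
  rw [dist_eq_norm] at hn
  rw [sub_nsmul x hnN, ← sub_eq_add_neg, dist_eq_norm,
    show -y - (N • x - n • x) = -(y - n • x) - N • x by abel]
  calc ‖-(y - n • x) - N • x‖ ≤ ‖y - n • x‖ + ‖N • x‖ := by
        simpa only [norm_neg] using norm_sub_le (-(y - n • x)) (N • x)
    _ < δ / 2 + δ / 2 := add_lt_add hn hN
    _ = δ := add_halves δ

/-- The orbit closure of `x` is a compact group, so finitely many shifts `b • x` bring each of its
points near `0`. -/
lemma exists_gap_norm_nsmul_lt (x : G) {δ : ℝ} (hδ : 0 < δ) :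
    ∃ g : ℕ, ∀ a : ℕ, ∃ m : ℕ, a ≤ m ∧ m < a + g ∧ ‖m • x‖ < δ := by
  set K := closure (range fun n : ℕ => n • x)
  have hcover : K ⊆ ⋃ b : ℕ, {y | ‖y + b • x‖ < δ} := fun y hy => by
    obtain ⟨b, hb⟩ := Metric.mem_closure_range_iff.1 (neg_mem_closure_range_nsmul x hy) δ hδ
    refine mem_iUnion.2 ⟨b, ?_⟩
    rwa [dist_eq_norm, ← norm_neg, neg_sub, sub_neg_eq_add, add_comm] at hb
  obtain ⟨s, hs⟩ := isClosed_closure.isCompact.elim_finite_subcover _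
    (fun b => isOpen_lt (by fun_prop : Continuous fun y : G => ‖y + b • x‖) continuous_const)
    hcover
  refine ⟨s.sup id + 1, fun a => ?_⟩
  obtain ⟨b, hbs, hb⟩ := mem_iUnion₂.1 (hs (subset_closure ⟨a, rfl⟩))
  refine ⟨a + b, Nat.le_add_right a b, ?_, by rwa [add_nsmul]⟩
  have : b ≤ s.sup id := Finset.le_sup (f := id) hbs
  omega

end CompactGroup

lemma div_le_card_filter_Ico {S : Set ℕ} {g : ℕ} (hS : ∀ a, ∃ m ∈ S, a ≤ m ∧ m < a + g)
    (a b : ℕ) : (b - a) / g ≤ ((Finset.Ico a b).filter (· ∈ S)).card := by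
  suffices key : ∀ q a, g * q ≤ b - a → q ≤ ((Finset.Ico a b).filter (· ∈ S)).card from
    key _ a (Nat.mul_div_le (b - a) g)
  intro q
  induction q with
  | zero => simp
  | succ q ih =>
    intro a hab
    obtain ⟨m, hmS, ham, hmg⟩ := hS a
    have hgb : g ≤ b - a := (Nat.le_mul_of_pos_right g q.succ_pos).trans hab
    have hsub : insert m ((Finset.Ico (a + g) b).filter (· ∈ S)) ⊆
        (Finset.Ico a b).filter (· ∈ S) := by
      intro x hx
      simp only [Finset.mem_insert, Finset.mem_filter, Finset.mem_Ico] at hx ⊢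
      rcases hx with rfl | ⟨⟨h1, h2⟩, h3⟩
      · exact ⟨⟨ham, by omega⟩, hmS⟩
      · exact ⟨⟨by omega, h2⟩, h3⟩
    have hm : m ∉ (Finset.Ico (a + g) b).filter (· ∈ S) := by
      simp only [Finset.mem_filter, Finset.mem_Ico]; omega
    have := Finset.card_le_card hsub
    rw [Finset.card_insert_of_notMem hm] at this
    have := ih (a + g) (by rw [mul_add_one] at hab; omega)
    omega

section Enumeration

variable {α : Type*}

def interleave (u v : ℕ → α) (n : ℕ) : α := if n % 2 = 0 then u (n / 2) else v (n / 2)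

lemma interleave_two_mul (u v : ℕ → α) (n : ℕ) : interleave u v (2 * n) = u n := by
  simp [interleave]

lemma interleave_two_mul_add_one (u v : ℕ → α) (n : ℕ) :
    interleave u v (2 * n + 1) = v n := by
  simp [interleave, Nat.add_mod, Nat.add_div]

lemma range_interleave (u v : ℕ → α) : range (interleave u v) = range u ∪ range v := by
  refine (range_subset_iff.2 fun n => ?_).antisymm
    (union_subset (range_subset_iff.2 fun n => ⟨2 * n, interleave_two_mul u v n⟩)
      (range_subset_iff.2 fun n => ⟨2 * n + 1, interleave_two_mul_add_one u v n⟩))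
  unfold interleave
  split_ifs
  exacts [Or.inl ⟨_, rfl⟩, Or.inr ⟨_, rfl⟩]

lemma map_interleave_atTop (u v : ℕ → α) :
    map (interleave u v) atTop = map u atTop ⊔ map v atTop := by
  ext s
  simp only [mem_sup, mem_map, mem_atTop_sets, mem_preimage]
  constructor
  · rintro ⟨N, hN⟩
    refine ⟨⟨N, fun n hn => ?_⟩, ⟨N, fun n hn => ?_⟩⟩
    · simpa [interleave_two_mul] using hN (2 * n) (by omega)
    · simpa [interleave_two_mul_add_one] using hN (2 * n + 1) (by omega)
  · rintro ⟨⟨N₁, hN₁⟩, ⟨N₂, hN₂⟩⟩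
    refine ⟨2 * (N₁ + N₂), fun n hn => ?_⟩
    unfold interleave
    split_ifs
    exacts [hN₁ _ (by omega), hN₂ _ (by omega)]

lemma map_atTop_eq_inf_principal_range {k : ℕ → ℕ} (hk : Tendsto k atTop atTop) :
    map k atTop = atTop ⊓ 𝓟 (range k) := by
  refine le_antisymm (le_inf hk (le_principal_iff.2 (range_mem_map))) fun s hs => ?_
  obtain ⟨N, hN⟩ := mem_atTop_sets.1 (mem_map.1 hs)
  refine mem_inf_principal.2 (mem_atTop_sets.2 ⟨(Finset.range N).sup k + 1, ?_⟩)
  rintro _ hm ⟨n, rfl⟩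
  refine hN n (not_lt.1 fun hn => ?_)
  have := Finset.le_sup (f := k) (Finset.mem_range.2 hn)
  omega

lemma map_nth_mem_range_atTop {k : ℕ → ℕ} (hk : Tendsto k atTop atTop) :
    map (Nat.nth (· ∈ range k)) atTop = map k atTop := by
  have hinf : (range k).Infinite := infinite_of_not_bddAbove (not_bddAbove_of_tendsto_atTop hk)
  rw [map_atTop_eq_inf_principal_range hk, map_atTop_eq_inf_principal_range
    (Nat.nth_strictMono (p := (· ∈ range k)) hinf).tendsto_atTop,
    Nat.range_nth_of_infinite (p := (· ∈ range k)) hinf]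
  rfl

lemma nth_succ_le_mul {p : ℕ → Prop} (hp : {x | p x}.Infinite) {C : ℕ}
    (h : ∀ x, p x → ∃ y, p y ∧ x < y ∧ y ≤ C * x) (n : ℕ) :
    Nat.nth p (n + 1) ≤ C * Nat.nth p n := by
  obtain ⟨y, hy, hlt, hle⟩ := h _ (Nat.nth_mem_of_infinite hp n)
  refine le_trans (not_lt.1 fun h' => ?_) hle
  exact hlt.not_ge (Nat.le_nth_of_lt_nth_succ h' hy)

end Enumeration

section Characterization

variable {H : AddSubgroup (AddCircle (1:ℝ))}

lemma characterizes_iff_tendsto {k : ℕ → ℕ} :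
    Characterizes k H ↔ ∀ α, α ∈ H ↔ Tendsto (fun n => k n • α) atTop (𝓝 0) := by
  simp only [Characterizes, ← tendsto_zero_iff_norm_tendsto_zero]

lemma Characterizes.congr_map {k k' : ℕ → ℕ} (hk : Characterizes k H)
    (h : map k atTop = map k' atTop) : Characterizes k' H := by
  rw [characterizes_iff_tendsto] at hk ⊢
  intro α
  change _ ↔ Tendsto ((· • α) ∘ k') _ _
  rw [hk α, ← tendsto_map'_iff, ← h, tendsto_map'_iff]
  rfl

def VanishesOn (u : ℕ → ℕ) (H : AddSubgroup (AddCircle (1:ℝ))) : Prop :=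
  ∀ α ∈ H, Tendsto (fun n => u n • α) atTop (𝓝 0)

lemma characterizes_interleave_iff {u v : ℕ → ℕ} :
    Characterizes (interleave u v) H ↔ ∀ α, α ∈ H ↔
      Tendsto (fun n => u n • α) atTop (𝓝 0) ∧ Tendsto (fun n => v n • α) atTop (𝓝 0) := by
  refine characterizes_iff_tendsto.trans (forall_congr' fun α => iff_congr Iff.rfl ?_)
  change Tendsto ((· • α) ∘ interleave u v) _ _ ↔ _
  rw [← tendsto_map'_iff, map_interleave_atTop, tendsto_sup]
  rfl

lemma Characterizes.interleave_of_vanishesOn {c u : ℕ → ℕ} (hc : Characterizes c H)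
    (hu : VanishesOn u H) :
    Characterizes (interleave c u) H :=
  characterizes_interleave_iff.2 fun α =>
    ⟨fun hα => ⟨(characterizes_iff_tendsto.1 hc α).1 hα, hu α hα⟩,
      fun h => (characterizes_iff_tendsto.1 hc α).2 h.1⟩

lemma Characterizes.interleave_add_of_vanishesOn {c a : ℕ → ℕ} (hc : Characterizes c H)
    (ha : VanishesOn a H) : Characterizes (interleave (c + a) a) H := by
  rw [characterizes_iff_tendsto] at hc
  refine characterizes_interleave_iff.2 fun α => ⟨fun hα => ⟨?_, ha α hα⟩, fun h => ?_⟩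
  · simpa [add_nsmul] using ((hc α).1 hα).add (ha α hα)
  · exact (hc α).2 (by simpa [add_nsmul] using h.1.sub h.2)

end Characterization

section Bohr

def bohrSet (e : ℕ → AddCircle (1:ℝ)) (t : ℕ) : Set ℕ :=
  {m | ‖m • fun j : Fin t => e j‖ < 1 / (t + 1)}

lemma bohrSet_zero (e : ℕ → AddCircle (1:ℝ)) : bohrSet e 0 = univ := by
  ext m
  simp only [bohrSet, mem_ofPred_eq, mem_univ, iff_true]
  rw [Subsingleton.elim (m • fun j : Fin 0 => e j) 0]
  norm_num

lemma exists_gap_bohrSet (e : ℕ → AddCircle (1:ℝ)) (t : ℕ) :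
    ∃ g : ℕ, ∀ a : ℕ, ∃ m ∈ bohrSet e t, a ≤ m ∧ m < a + g := by
  obtain ⟨g, hg⟩ := exists_gap_norm_nsmul_lt (fun j : Fin t => e j) Nat.one_div_pos_of_nat
  exact ⟨g, fun a => let ⟨m, ham, hmg, hm⟩ := hg a; ⟨m, hm, ham, hmg⟩⟩

lemma vanishesOn_of_mem_bohrSet {H : AddSubgroup (AddCircle (1:ℝ))} {e : ℕ → AddCircle (1:ℝ)}
    (he : range e = H) {m t : ℕ → ℕ} (ht : Tendsto t atTop atTop)
    (hm : ∀ n, m n ∈ bohrSet e (t n)) : VanishesOn m H := by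
  rintro _ hα
  rw [← SetLike.mem_coe, ← he] at hα
  obtain ⟨i₀, rfl⟩ := hα
  refine tendsto_zero_iff_norm_tendsto_zero.2 (squeeze_zero'
    (Eventually.of_forall fun n => norm_nonneg _) ?_ (tendsto_one_div_add_atTop_nhds_zero_nat.comp ht))
  filter_upwards [ht.eventually_gt_atTop i₀] with n hn
  exact (norm_le_pi_norm (m n • fun j : Fin (t n) => e j) ⟨i₀, hn⟩).trans (hm n).le

end Bohr

section Thick

def Thick (S : Set ℕ) (ε : ℝ) (a b : ℕ) : Prop :=
  ε * ((b - a : ℕ) : ℝ) ≤ ((Finset.Ico a b).filter (· ∈ S)).card ∧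
    ((Finset.Ico a b).filter (· ∈ S)).Nonempty

variable {S T : Set ℕ} {ε : ℝ} {a b : ℕ}

lemma thick_univ (hab : a < b) (hε : ε ≤ 1) : Thick univ ε a b := by
  simp only [Thick, mem_univ, Finset.filter_true, Nat.card_Ico, Finset.nonempty_Ico, hab, and_true]
  exact mul_le_of_le_one_left (Nat.cast_nonneg _) hε

lemma Thick.mono (h : Thick S ε a b) (hST : Ico a b ∩ S ⊆ T) : Thick T ε a b := by
  have hsub : (Finset.Ico a b).filter (· ∈ S) ⊆ (Finset.Ico a b).filter (· ∈ T) := fun m hm => by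
    simp only [Finset.mem_filter, Finset.mem_Ico] at hm ⊢
    exact ⟨hm.1, hST ⟨hm.1, hm.2⟩⟩
  exact ⟨h.1.trans (Nat.cast_le.2 (Finset.card_le_card hsub)), h.2.mono hsub⟩

lemma Thick.exists_mem (h : Thick S ε a b) : ∃ m, m ∈ Ico a b ∩ S := by
  obtain ⟨m, hm⟩ := h.2
  simp only [Finset.mem_filter, Finset.mem_Ico] at hm
  exact ⟨m, hm.1, hm.2⟩

lemma thick_of_gap {g : ℕ} (hS : ∀ a, ∃ m ∈ S, a ≤ m ∧ m < a + g) (hlen : 2 * g ≤ b - a)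
    (hε0 : 0 ≤ ε) (hεg : ε * g ≤ 1 / 2) : Thick S ε a b := by
  set N := ((Finset.Ico a b).filter (· ∈ S)).card
  have hg : 0 < g := by obtain ⟨m, -, -, hm⟩ := hS 0; omega
  have hN : (b - a) / g ≤ N := div_le_card_filter_Ico hS a b
  have hN2 : 2 ≤ N := le_trans ((Nat.le_div_iff_mul_le hg).2 (by linarith)) hN
  have hlen' : ((b - a : ℕ) : ℝ) ≤ g * (N + 1) := by
    have := Nat.lt_div_mul_add (a := b - a) hg
    exact_mod_cast (by nlinarith : b - a ≤ g * (N + 1))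
  refine ⟨?_, Finset.card_pos.1 (by omega)⟩
  have hN2' : (2 : ℝ) ≤ N := by exact_mod_cast hN2
  calc ε * ((b - a : ℕ) : ℝ) ≤ ε * g * (N + 1) := by
        rw [mul_assoc]; exact mul_le_mul_of_nonneg_left hlen' hε0
    _ ≤ 1 / 2 * (N + 1) := mul_le_mul_of_nonneg_right hεg (by positivity)
    _ ≤ N := by linarith

noncomputable def thickLevel (B : ℕ → Set ℕ) (ε : ℕ → ℝ) (i : ℕ → ℕ) (j : ℕ) : ℕ :=
  Nat.findGreatest (fun t => Thick (B t) (ε j) (i j) (i (j + 1))) j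

variable {B : ℕ → Set ℕ} {ε : ℕ → ℝ} {i : ℕ → ℕ}

lemma thick_thickLevel (hB : B 0 = univ) (hε : ∀ j, ε j ≤ 1) (hi : StrictMono i) (j : ℕ) :
    Thick (B (thickLevel B ε i j)) (ε j) (i j) (i (j + 1)) :=
  Nat.findGreatest_spec (P := fun t => Thick (B t) (ε j) (i j) (i (j + 1))) (Nat.zero_le j)
    (hB ▸ thick_univ (hi j.lt_add_one) (hε j))

lemma tendsto_thickLevel (hB : ∀ t, ∃ g, ∀ a, ∃ m ∈ B t, a ≤ m ∧ m < a + g)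
    (hε0 : ∀ j, 0 ≤ ε j) (hε : Tendsto ε atTop (𝓝 0))
    (hlen : Tendsto (fun j => i (j + 1) - i j) atTop atTop) :
    Tendsto (thickLevel B ε i) atTop atTop := by
  refine tendsto_atTop.2 fun T => ?_
  obtain ⟨g, hg⟩ := hB T
  have hεg : ∀ᶠ j in atTop, ε j * g ≤ 1 / 2 :=
    (hε.mul_const (g : ℝ)).eventually (ge_mem_nhds (by norm_num))
  filter_upwards [eventually_ge_atTop T, hlen.eventually_ge_atTop (2 * g), hεg] with j hTj hj hεj
  exact Nat.le_findGreatest hTj (thick_of_gap hg hj (hε0 j) hεj)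

end Thick

section Construction

variable {H : AddSubgroup (AddCircle (1:ℝ))} {e : ℕ → AddCircle (1:ℝ)}

lemma vanishesOn_nth_iUnion_bohrSet (he : range e = H) {i τ : ℕ → ℕ} (hi : StrictMono i)
    (hτ : Tendsto τ atTop atTop) (hne : ∀ j, ∃ m, m ∈ Ico (i j) (i (j + 1)) ∩ bohrSet e (τ j)) :
    VanishesOn (Nat.nth (· ∈ ⋃ j, Ico (i j) (i (j + 1)) ∩ bohrSet e (τ j))) H := by
  set U := ⋃ j, Ico (i j) (i (j + 1)) ∩ bohrSet e (τ j)
  have hU : U.Infinite := infinite_of_forall_exists_gt fun n => by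
    obtain ⟨m, hm⟩ := hne (n + 1)
    exact ⟨m, mem_iUnion.2 ⟨n + 1, hm⟩, lt_of_lt_of_le hi.le_apply hm.1.1⟩
  choose J hJ using fun n => mem_iUnion.1 (Nat.nth_mem_of_infinite (p := (· ∈ U)) hU n)
  refine vanishesOn_of_mem_bohrSet he (hτ.comp (tendsto_atTop.2 fun M => ?_)) fun n => (hJ n).2
  filter_upwards [eventually_ge_atTop (i M)] with n hn
  have : n ≤ Nat.nth (· ∈ U) n := (Nat.nth_strictMono hU).le_apply
  have hlt : i M < i (J n + 1) := by have := (hJ n).1.2; omega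
  exact Nat.lt_add_one_iff.1 (hi.lt_iff_lt.1 hlt)

lemma exists_characterizes_thick (he : range e = H) {c : ℕ → ℕ} (hc : Characterizes c H)
    {ε : ℕ → ℝ} (hε01 : ∀ j, 0 ≤ ε j ∧ ε j ≤ 1) (hε : Tendsto ε atTop (𝓝 0))
    {i : ℕ → ℕ} (hi : StrictMono i) (hlen : Tendsto (fun j => i (j + 1) - i j) atTop atTop) :
    ∃ k, Characterizes k H ∧ ∀ j, Thick (range k) (ε j) (i j) (i (j + 1)) := by
  set τ := thickLevel (bohrSet e) ε i
  have hthick := thick_thickLevel (bohrSet_zero e) (fun j => (hε01 j).2) hi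
  set U := ⋃ j, Ico (i j) (i (j + 1)) ∩ bohrSet e (τ j)
  have hu : VanishesOn (Nat.nth (· ∈ U)) H := vanishesOn_nth_iUnion_bohrSet he hi
    (tendsto_thickLevel (exists_gap_bohrSet e) (fun j => (hε01 j).1) hε hlen)
    fun j => (hthick j).exists_mem
  refine ⟨interleave c (Nat.nth (· ∈ U)), hc.interleave_of_vanishesOn hu,
    fun j => (hthick j).mono fun m hm => ?_⟩
  rw [range_interleave]
  exact Or.inr ⟨_, Nat.nth_count (p := (· ∈ U)) (mem_iUnion.2 ⟨j, hm⟩)⟩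

lemma exists_vanishesOn_mem_Ico_two_pow (he : range e = H) :
    ∃ a : ℕ → ℕ, VanishesOn a H ∧ ∀ r, a r ∈ Ico (2 ^ r) (2 ^ (r + 1)) := by
  have hi : StrictMono (2 ^ · : ℕ → ℕ) := pow_right_strictMono₀ one_lt_two
  have hlen : Tendsto (fun r => 2 ^ (r + 1) - 2 ^ r) atTop atTop :=
    tendsto_atTop_mono (fun r => show r ≤ _ by
      rw [pow_succ]; have := @Nat.lt_two_pow_self r; omega) tendsto_id
  choose a ha using fun r =>
    (thick_thickLevel (bohrSet_zero e) (fun _ => zero_le_one) hi r).exists_mem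
  exact ⟨a, vanishesOn_of_mem_bohrSet he (tendsto_thickLevel (exists_gap_bohrSet e)
    (fun _ => le_rfl) tendsto_const_nhds hlen) fun r => (ha r).2, fun r => (ha r).1⟩

lemma exists_characterizes_strictMono_le_four_mul (he : range e = H) {c : ℕ → ℕ}
    (hc : Characterizes c H) :
    ∃ k : ℕ → ℕ, StrictMono k ∧ (∀ n, 0 < k n) ∧ Characterizes k H ∧
      ∀ n, k (n + 1) ≤ 4 * k n := by
  obtain ⟨a, ha, haI⟩ := exists_vanishesOn_mem_Ico_two_pow he
  set k := interleave (c + a) a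
  have hta : Tendsto a atTop atTop :=
    tendsto_atTop_mono (fun r => (Nat.lt_two_pow_self).le.trans (haI r).1) tendsto_id
  have htk : Tendsto k atTop atTop := by
    rw [Tendsto, map_interleave_atTop]
    exact sup_le (tendsto_atTop_mono (fun r => le_add_self) hta) hta
  have hinf : (range k).Infinite := infinite_of_not_bddAbove (not_bddAbove_of_tendsto_atTop htk)
  have hpos : ∀ x ∈ range k, 0 < x := by
    rw [range_interleave]
    rintro _ (⟨r, rfl⟩ | ⟨r, rfl⟩) <;>
      linarith [(haI r).1, Nat.one_le_two_pow (n := r), Pi.add_apply c a r]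
  refine ⟨Nat.nth (· ∈ range k), Nat.nth_strictMono hinf,
    fun n => hpos _ (Nat.nth_mem_of_infinite hinf n),
    (hc.interleave_add_of_vanishesOn ha).congr_map (map_nth_mem_range_atTop htk).symm,
    nth_succ_le_mul hinf fun x hx => ⟨a (Nat.log 2 x + 1), ?_, ?_, ?_⟩⟩
  · exact ⟨_, interleave_two_mul_add_one _ _ _⟩
  · exact (Nat.lt_pow_succ_log_self one_lt_two x).trans_le (haI _).1
  · have := Nat.pow_log_le_self 2 (hpos x hx).ne'
    have := (haI (Nat.log 2 x + 1)).2
    rw [pow_succ, pow_succ] at this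
    omega

end Construction

theorem exists_thick_characterizing_sequence_general
    (H : AddSubgroup (AddCircle (1:ℝ))) (hH : (H : Set (AddCircle (1:ℝ))).Countable)
    (c : ℕ → ℕ) (hc : Characterizes c H)
    (ε : ℕ → ℝ) (hε01 : ∀ j, 0 ≤ ε j ∧ ε j ≤ 1)
    (hε : Filter.Tendsto ε Filter.atTop (nhds 0))
    (i : ℕ → ℕ) (hi : StrictMono i)
    (hilen : Filter.Tendsto (fun j => i (j+1) - i j) Filter.atTop Filter.atTop) :
    (∃ k : ℕ → ℕ, Characterizes k H ∧
      ∀ j : ℕ,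
        ε j * ((i (j+1) - i j : ℕ) : ℝ) ≤
          (((Finset.Ico (i j) (i (j+1))).filter
            (fun m => m ∈ Set.range k)).card : ℝ)) ∧
    ∃ k' : ℕ → ℕ, StrictMono k' ∧ (∀ n, 0 < k' n) ∧ Characterizes k' H ∧
      ∃ C : ℝ, ∀ n, (k' (n+1) : ℝ) / (k' n : ℝ) ≤ C := by
  obtain ⟨e, he⟩ := hH.exists_eq_range ⟨0, H.zero_mem⟩
  obtain ⟨k, hk, hthick⟩ := exists_characterizes_thick he.symm hc hε01 hε hi hilen
  obtain ⟨k', hmono, hpos, hk', hle⟩ := exists_characterizes_strictMono_le_four_mul he.symm hc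
  refine ⟨⟨k, hk, fun j => (hthick j).1⟩, k', hmono, hpos, hk', 4, fun n => ?_⟩
  rw [div_le_iff₀ (Nat.cast_pos.2 (hpos n))]
  exact_mod_cast hle n

/-- Given a countable characterizable subgroup `H ≤ 𝕋`, a sequence `εⱼ → 0` in
`[0,1]` and a partition of `ℕ` into consecutive intervals `Iⱼ = [iⱼ, i_{j+1})`
of length tending to infinity, there is a characterizing sequence occupying at
least a proportion `εⱼ` of each `Iⱼ`; in particular there is a characterizing
sequence with bounded quotients. -/
theorem exists_thick_characterizing_sequence
    (H : AddSubgroup (AddCircle (1:ℝ))) (hH : (H : Set (AddCircle (1:ℝ))).Countable)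
    (c : ℕ → ℕ) (hc : Characterizes c H)
    (ε : ℕ → ℝ) (hε01 : ∀ j, 0 ≤ ε j ∧ ε j ≤ 1)
    (hε : Filter.Tendsto ε Filter.atTop (nhds 0))
    (i : ℕ → ℕ) (hi0 : i 0 = 0) (hi : StrictMono i)
    (hilen : Filter.Tendsto (fun j => i (j+1) - i j) Filter.atTop Filter.atTop) :
    (∃ k : ℕ → ℕ, Characterizes k H ∧
      ∀ j : ℕ,
        ε j * ((i (j+1) - i j : ℕ) : ℝ) ≤
          (((Finset.Ico (i j) (i (j+1))).filter
            (fun m => m ∈ Set.range k)).card : ℝ)) ∧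
    ∃ k' : ℕ → ℕ, StrictMono k' ∧ (∀ n, 0 < k' n) ∧ Characterizes k' H ∧
      ∃ C : ℝ, ∀ n, (k' (n+1) : ℝ) / (k' n : ℝ) ≤ C :=
  exists_thick_characterizing_sequence_general H hH c hc ε hε01 hε i hi hilen
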